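/- Let a < b be real numbers and let w : ℝ³ → ℝ³ be continuously differentiable on a neighborhood of the closed cylinder D̄ × [a,b], with div w = 0 there, and suppose w₁(x)x₁ + w₂(x)x₂ = 0 whenever x₁² + x₂² = 1 and x₃ ∈ [a,b]. Then ∫_{D×[a,b]} (w₁² + w₂²) dx ≤ 2 ∫_{D×[a,b]} ( Σ_{i,j=1}^{2} (∂_{x_i} w_j)² + (∂_{x₃} w₃)² ) dx. -/

import Mathlib

open MeasureTheory

/-- Partial derivative `∂_{x_i} f` of a scalar function on `ℝ³`. -/
noncomputable def pd (i : Fin 3) (f : (Fin 3 → ℝ) → ℝ) (x : Fin 3 → ℝ) : ℝ :=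
  fderiv ℝ f x (Pi.single i 1)

/-- The solid finite cylinder `D × [a,b]` with `D` the open unit disk. -/
def solidCyl (a b : ℝ) : Set (Fin 3 → ℝ) :=
  {x | x 0 ^ 2 + x 1 ^ 2 < 1 ∧ x 2 ∈ Set.Icc a b}

/-- The closed finite cylinder `D̄ × [a,b]`. -/
def closedCyl (a b : ℝ) : Set (Fin 3 → ℝ) :=
  {x | x 0 ^ 2 + x 1 ^ 2 ≤ 1 ∧ x 2 ∈ Set.Icc a b}

/-!
Let `u = w₁x₁ + w₂x₂`, which vanishes on the lateral boundary. The horizontal divergence of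
`u · (w₁, w₂)` is `w₁² + w₂² + w₁ (x_h · ∂₁w_h) + w₂ (x_h · ∂₂w_h) + u (∂₁w₁ + ∂₂w₂)`, and its
integral over the cylinder is zero: integrate `∂ᵢ` (`i = 1, 2`) along the horizontal chords,
whose endpoints lie on the lateral boundary. Replacing `∂₁w₁ + ∂₂w₂` by `-∂₃w₃` and bounding
the remaining terms by Young's inequality with `|x_h| ≤ 1` gives, pointwise,
`w₁² + w₂² - div_h (u w_h) ≤ (w₁² + w₂²) / 2 + Σ (∂w)²`; integrate.
-/

open Set

lemma measurableSet_solidCyl (a b : ℝ) : MeasurableSet (solidCyl a b) :=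
  (measurableSet_lt (f := fun x : Fin 3 → ℝ => x 0 ^ 2 + x 1 ^ 2) (by fun_prop)
    measurable_const).inter (measurableSet_Icc.preimage (measurable_pi_apply 2))

lemma solidCyl_subset_closedCyl (a b : ℝ) : solidCyl a b ⊆ closedCyl a b :=
  fun _ hx => ⟨hx.1.le, hx.2⟩

lemma isCompact_closedCyl (a b : ℝ) : IsCompact (closedCyl a b) := by
  have hclosed : IsClosed (closedCyl a b) :=
    (isClosed_le (f := fun x : Fin 3 → ℝ => x 0 ^ 2 + x 1 ^ 2) (by fun_prop)
      continuous_const).inter (isClosed_Icc.preimage (continuous_apply 2))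
  refine (isCompact_univ_pi (s := ![Icc (-1) 1, Icc (-1) 1, Icc a b])
    fun i => by fin_cases i <;> exact isCompact_Icc).of_isClosed_subset hclosed ?_
  rintro x ⟨hdisk, hx2⟩ i -
  have hx0 : x 0 ^ 2 ≤ 1 := by nlinarith [sq_nonneg (x 1)]
  have hx1 : x 1 ^ 2 ≤ 1 := by nlinarith [sq_nonneg (x 0)]
  rw [sq_le_one_iff_abs_le_one] at hx0 hx1
  fin_cases i
  exacts [abs_le.1 hx0, abs_le.1 hx1, hx2]

lemma ContinuousOn.integrableOn_solidCyl {a b : ℝ} {f : (Fin 3 → ℝ) → ℝ}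
    (hf : ContinuousOn f (closedCyl a b)) : IntegrableOn f (solidCyl a b) :=
  (hf.integrableOn_compact (isCompact_closedCyl a b)).mono_set (solidCyl_subset_closedCyl a b)

lemma insertNth_sq_add_sq {i : Fin 3} (hi : i = 0 ∨ i = 1) (t : ℝ) (y : Fin 2 → ℝ) :
    (Fin.insertNth i t y : Fin 3 → ℝ) 0 ^ 2 + (Fin.insertNth i t y : Fin 3 → ℝ) 1 ^ 2
      = t ^ 2 + y 0 ^ 2 := by
  rcases hi with rfl | rfl
  exacts [rfl, add_comm _ _]

lemma insertNth_apply_two {i : Fin 3} (hi : i = 0 ∨ i = 1) (t : ℝ) (y : Fin 2 → ℝ) :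
    (Fin.insertNth i t y : Fin 3 → ℝ) 2 = y 1 := by
  rcases hi with rfl | rfl <;> rfl

lemma insertNth_mem_solidCyl_iff {a b : ℝ} {i : Fin 3} (hi : i = 0 ∨ i = 1) (t : ℝ)
    {y : Fin 2 → ℝ} (hy : y 1 ∈ Icc a b) :
    (Fin.insertNth i t y : Fin 3 → ℝ) ∈ solidCyl a b ↔
      t ∈ Ioo (-√(1 - y 0 ^ 2)) √(1 - y 0 ^ 2) := by
  rw [mem_Ioo, ← abs_lt, Real.lt_sqrt (abs_nonneg t), sq_abs, lt_sub_iff_add_lt]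
  simp only [solidCyl, mem_ofPred_eq, insertNth_sq_add_sq hi, insertNth_apply_two hi, hy,
    and_true]

lemma hasDerivAt_insertNth {n : ℕ} (i : Fin (n + 1)) (t : ℝ) (y : Fin n → ℝ) :
    HasDerivAt (fun t : ℝ => (Fin.insertNth i t y : Fin (n + 1) → ℝ)) (Pi.single i 1) t := by
  have h : (fun t : ℝ => (Fin.insertNth i t y : Fin (n + 1) → ℝ))
      = Function.update (Fin.insertNth (α := fun _ => ℝ) i 0 y) i := by
    funext t; simp
  exact h ▸ hasDerivAt_update _ i t

lemma hasDerivAt_pd_insertNth {f : (Fin 3 → ℝ) → ℝ} {i : Fin 3} {t : ℝ} {y : Fin 2 → ℝ}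
    (hf : DifferentiableAt ℝ f (Fin.insertNth i t y)) :
    HasDerivAt (fun t => f (Fin.insertNth i t y)) (pd i f (Fin.insertNth i t y)) t :=
  hf.hasFDerivAt.comp_hasDerivAt t (hasDerivAt_insertNth i t y)

lemma ContDiffOn.continuousOn_pd {U : Set (Fin 3 → ℝ)} {f : (Fin 3 → ℝ) → ℝ}
    (hf : ContDiffOn ℝ 1 f U) (hU : IsOpen U) (i : Fin 3) : ContinuousOn (pd i f) U :=
  (hf.continuousOn_fderiv_of_isOpen hU le_rfl).clm_apply continuousOn_const

lemma integral_pd_insertNth {U : Set (Fin 3 → ℝ)} {f : (Fin 3 → ℝ) → ℝ}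
    (hf : ContDiffOn ℝ 1 f U) (hU : IsOpen U) (i : Fin 3) (y : Fin 2 → ℝ) {α β : ℝ}
    (hseg : ∀ t ∈ uIcc α β, (Fin.insertNth i t y : Fin 3 → ℝ) ∈ U) :
    ∫ t in α..β, pd i f (Fin.insertNth i t y)
      = f (Fin.insertNth i β y) - f (Fin.insertNth i α y) := by
  have hline : Continuous fun t : ℝ => (Fin.insertNth i t y : Fin 3 → ℝ) :=
    continuous_iff_continuousAt.2 fun t => (hasDerivAt_insertNth i t y).continuousAt
  refine intervalIntegral.integral_eq_sub_of_hasDerivAt (fun t ht => hasDerivAt_pd_insertNth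
    ((hf.differentiableOn one_ne_zero).differentiableAt (hU.mem_nhds (hseg t ht)))) ?_
  exact ((hf.continuousOn_pd hU i).comp hline.continuousOn hseg).intervalIntegrable

lemma integral_eq_zero_of_integral_insertNth_eq_zero {n : ℕ} (i : Fin (n + 1))
    {f : (Fin (n + 1) → ℝ) → ℝ} (hf : Integrable f)
    (h : ∀ y : Fin n → ℝ, ∫ t, f (Fin.insertNth i t y) = 0) : ∫ x, f x = 0 := by
  have hmp := (volume_preserving_piFinSuccAbove (fun _ : Fin (n + 1) => ℝ) i).symm
  have hint := (hmp.integrable_comp_emb (MeasurableEquiv.measurableEmbedding _)).2 hf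
  rw [Measure.volume_eq_prod] at hint
  rw [← hmp.integral_comp', Measure.volume_eq_prod]
  exact (integral_prod_symm _ hint).trans (integral_eq_zero_of_ae (.of_forall h))

lemma integral_pd_solidCyl_eq_zero {a b : ℝ} {U : Set (Fin 3 → ℝ)} (hU : IsOpen U)
    (hsub : closedCyl a b ⊆ U) {G : (Fin 3 → ℝ) → ℝ} (hG : ContDiffOn ℝ 1 G U)
    (hG0 : ∀ x : Fin 3 → ℝ, x 0 ^ 2 + x 1 ^ 2 = 1 → x 2 ∈ Icc a b → G x = 0)
    {i : Fin 3} (hi : i = 0 ∨ i = 1) :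
    ∫ x in solidCyl a b, pd i G x = 0 := by
  have hmeas := measurableSet_solidCyl a b
  rw [← integral_indicator hmeas]
  refine integral_eq_zero_of_integral_insertNth_eq_zero i ((integrable_indicator_iff hmeas).2
    ((hG.continuousOn_pd hU i).mono hsub).integrableOn_solidCyl) fun y => ?_
  by_cases hy : y 1 ∈ Icc a b
  swap
  · refine integral_eq_zero_of_ae (.of_forall fun t => indicator_of_notMem (fun h => hy ?_) _)
    exact insertNth_apply_two hi t y ▸ h.2
  obtain ⟨s, hs⟩ : ∃ s, s = √(1 - y 0 ^ 2) := ⟨_, rfl⟩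
  have hs0 : 0 ≤ s := hs ▸ Real.sqrt_nonneg _
  have hchord : ∀ t, (solidCyl a b).indicator (pd i G) (Fin.insertNth i t y)
      = (Ioo (-s) s).indicator (fun t => pd i G (Fin.insertNth i t y)) t := by
    intro t
    simp only [indicator, insertNth_mem_solidCyl_iff hi t hy, ← hs]
  simp_rw [hchord]
  rw [integral_indicator measurableSet_Ioo, ← integral_Ioc_eq_integral_Ioo,
    ← intervalIntegral.integral_of_le (neg_le_self hs0)]
  rcases lt_or_ge 1 (y 0 ^ 2) with hout | hin
  · rw [hs, Real.sqrt_eq_zero'.2 (by linarith), neg_zero, intervalIntegral.integral_same]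
  have hs2 : s ^ 2 = 1 - y 0 ^ 2 := hs ▸ Real.sq_sqrt (by linarith)
  have hdisk : ∀ t, (Fin.insertNth i t y : Fin 3 → ℝ) 0 ^ 2
      + (Fin.insertNth i t y : Fin 3 → ℝ) 1 ^ 2 = 1 - (s ^ 2 - t ^ 2) := fun t => by
    rw [insertNth_sq_add_sq hi]; linarith
  have hseg : ∀ t ∈ uIcc (-s) s, (Fin.insertNth i t y : Fin 3 → ℝ) ∈ U := by
    intro t ht
    rw [uIcc_of_le (neg_le_self hs0)] at ht
    refine hsub ⟨?_, insertNth_apply_two hi t y ▸ hy⟩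
    rw [hdisk]
    linarith [sq_le_sq' ht.1 ht.2]
  have hend : ∀ t, t ^ 2 = s ^ 2 → G (Fin.insertNth i t y) = 0 := fun t ht =>
    hG0 _ (by rw [hdisk, ht, sub_self, sub_zero]) (insertNth_apply_two hi t y ▸ hy)
  rw [integral_pd_insertNth hG hU i y hseg, hend s rfl, hend (-s) (neg_sq s), sub_self]

lemma pd_add {f g : (Fin 3 → ℝ) → ℝ} {x : Fin 3 → ℝ} (hf : DifferentiableAt ℝ f x)
    (hg : DifferentiableAt ℝ g x) (i : Fin 3) :
    pd i (fun y => f y + g y) x = pd i f x + pd i g x := by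
  simp [pd, fderiv_fun_add hf hg]

lemma pd_mul {f g : (Fin 3 → ℝ) → ℝ} {x : Fin 3 → ℝ} (hf : DifferentiableAt ℝ f x)
    (hg : DifferentiableAt ℝ g x) (i : Fin 3) :
    pd i (fun y => f y * g y) x = pd i f x * g x + f x * pd i g x := by
  simp only [pd, fderiv_fun_mul hf hg, add_apply, smul_apply, smul_eq_mul]
  ring

lemma pd_apply (x : Fin 3 → ℝ) (i j : Fin 3) :
    pd i (fun y => y j) x = (Pi.single i 1 : Fin 3 → ℝ) j := by
  simp [pd, fderiv_apply]

def radialPart (w : (Fin 3 → ℝ) → (Fin 3 → ℝ)) (x : Fin 3 → ℝ) : ℝ :=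
  w x 0 * x 0 + w x 1 * x 1

def radialFlux (w : (Fin 3 → ℝ) → (Fin 3 → ℝ)) (j : Fin 3) (x : Fin 3 → ℝ) : ℝ :=
  radialPart w x * w x j

lemma ContDiffOn.radialFlux {U : Set (Fin 3 → ℝ)} {w : (Fin 3 → ℝ) → (Fin 3 → ℝ)}
    (hw : ContDiffOn ℝ 1 w U) (j : Fin 3) : ContDiffOn ℝ 1 (radialFlux w j) U := by
  have hwj := contDiffOn_pi.1 hw
  unfold _root_.radialFlux radialPart
  fun_prop

lemma pd_radialPart {w : (Fin 3 → ℝ) → (Fin 3 → ℝ)} {x : Fin 3 → ℝ}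
    (hw : ∀ j, DifferentiableAt ℝ (fun y => w y j) x) (i : Fin 3) :
    pd i (radialPart w) x
      = pd i (fun y => w y 0) x * x 0 + w x 0 * (Pi.single i 1 : Fin 3 → ℝ) 0
        + (pd i (fun y => w y 1) x * x 1 + w x 1 * (Pi.single i 1 : Fin 3 → ℝ) 1) := by
  have hcoord : ∀ j : Fin 3, DifferentiableAt ℝ (fun y : Fin 3 → ℝ => y j) x :=
    fun j => differentiableAt_apply j x
  unfold radialPart
  rw [pd_add ((hw 0).fun_mul (hcoord 0)) ((hw 1).fun_mul (hcoord 1)),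
    pd_mul (hw 0) (hcoord 0), pd_mul (hw 1) (hcoord 1), pd_apply, pd_apply]

lemma pd_radialFlux_add {w : (Fin 3 → ℝ) → (Fin 3 → ℝ)} {x : Fin 3 → ℝ}
    (hw : ∀ j, DifferentiableAt ℝ (fun y => w y j) x) :
    pd 0 (radialFlux w 0) x + pd 1 (radialFlux w 1) x
      = w x 0 ^ 2 + w x 1 ^ 2
        + w x 0 * (x 0 * pd 0 (fun y => w y 0) x + x 1 * pd 0 (fun y => w y 1) x)
        + w x 1 * (x 0 * pd 1 (fun y => w y 0) x + x 1 * pd 1 (fun y => w y 1) x)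
        + radialPart w x * (pd 0 (fun y => w y 0) x + pd 1 (fun y => w y 1) x) := by
  have hu : DifferentiableAt ℝ (radialPart w) x :=
    ((hw 0).mul (differentiableAt_apply 0 x)).add ((hw 1).mul (differentiableAt_apply 1 x))
  unfold radialFlux
  rw [pd_mul hu (hw 0), pd_mul hu (hw 1), pd_radialPart hw, pd_radialPart hw]
  simp only [radialPart, Pi.single_eq_same, ne_eq, Fin.reduceEq, not_false_eq_true,
    Pi.single_eq_of_ne]
  ring

lemma integral_pd_radialFlux_add_eq_zero {a b : ℝ} {U : Set (Fin 3 → ℝ)} (hU : IsOpen U)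
    (hsub : closedCyl a b ⊆ U) {w : (Fin 3 → ℝ) → (Fin 3 → ℝ)} (hw : ContDiffOn ℝ 1 w U)
    (hbc : ∀ x : Fin 3 → ℝ, x 0 ^ 2 + x 1 ^ 2 = 1 → x 2 ∈ Icc a b → radialPart w x = 0) :
    ∫ x in solidCyl a b, (pd 0 (radialFlux w 0) x + pd 1 (radialFlux w 1) x) = 0 := by
  have hflux : ∀ j, ContDiffOn ℝ 1 (radialFlux w j) U := hw.radialFlux
  have hflux0 : ∀ j, ∀ x : Fin 3 → ℝ, x 0 ^ 2 + x 1 ^ 2 = 1 → x 2 ∈ Icc a b →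
      radialFlux w j x = 0 := fun j x h1 h2 => by rw [radialFlux, hbc x h1 h2, zero_mul]
  have hint : ∀ j i, IntegrableOn (pd i (radialFlux w j)) (solidCyl a b) := fun j i =>
    (((hflux j).continuousOn_pd hU i).mono hsub).integrableOn_solidCyl
  rw [integral_add (hint 0 0) (hint 1 1),
    integral_pd_solidCyl_eq_zero hU hsub (hflux 0) (hflux0 0) (.inl rfl),
    integral_pd_solidCyl_eq_zero hU hsub (hflux 1) (hflux0 1) (.inr rfl), add_zero]

-- Young's inequality on each cross term, then `u² ≤ |w_h|² |x_h|²` with `|x_h| ≤ 1`.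
lemma neg_cross_terms_le {w₀ w₁ x₀ x₁ A B C D E : ℝ} (hx : x₀ ^ 2 + x₁ ^ 2 ≤ 1) :
    -(w₀ * (x₀ * A + x₁ * B) + w₁ * (x₀ * C + x₁ * D) - (w₀ * x₀ + w₁ * x₁) * E)
      ≤ (w₀ ^ 2 + w₁ ^ 2) / 2 + (A ^ 2 + B ^ 2 + C ^ 2 + D ^ 2 + E ^ 2) := by
  nlinarith [sq_nonneg (w₀ * x₀ / 2 + A), sq_nonneg (w₀ * x₁ / 2 + B),
    sq_nonneg (w₁ * x₀ / 2 + C), sq_nonneg (w₁ * x₁ / 2 + D),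
    sq_nonneg ((w₀ * x₀ + w₁ * x₁) / 2 - E), sq_nonneg (w₀ * x₁ - w₁ * x₀),
    mul_nonneg (sq_nonneg w₀) (sub_nonneg.2 hx), mul_nonneg (sq_nonneg w₁) (sub_nonneg.2 hx)]

lemma setIntegral_le_two_mul_of_sub_le {α : Type*} [MeasurableSpace α] {μ : Measure α}
    {s : Set α} (hs : MeasurableSet s) {W S g : α → ℝ} (hW : IntegrableOn W s μ)
    (hS : IntegrableOn S s μ) (hg : IntegrableOn g s μ) (hg0 : ∫ x in s, g x ∂μ = 0)
    (h : ∀ x ∈ s, W x - g x ≤ W x / 2 + S x) :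
    ∫ x in s, W x ∂μ ≤ 2 * ∫ x in s, S x ∂μ := by
  have hmono := setIntegral_mono_on (f := fun x => W x - g x) (g := fun x => W x / 2 + S x)
    (hW.sub hg) ((hW.div_const 2).add hS) hs h
  rw [integral_sub hW hg, hg0, integral_add (hW.div_const 2) hS, integral_div] at hmono
  linarith

theorem stmt12_general (a b : ℝ) (w : (Fin 3 → ℝ) → (Fin 3 → ℝ))
    (U : Set (Fin 3 → ℝ)) (hU : IsOpen U) (hsub : closedCyl a b ⊆ U)
    (hw : ContDiffOn ℝ 1 w U)
    (hdiv : ∀ x ∈ closedCyl a b, ∑ j : Fin 3, pd j (fun y => w y j) x = 0)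
    (hbc : ∀ x : Fin 3 → ℝ, x 0 ^ 2 + x 1 ^ 2 = 1 → x 2 ∈ Set.Icc a b →
      w x 0 * x 0 + w x 1 * x 1 = 0) :
    (∫ x in solidCyl a b, (w x 0 ^ 2 + w x 1 ^ 2)) ≤
      2 * ∫ x in solidCyl a b,
        ((pd 0 (fun y => w y 0) x) ^ 2 + (pd 0 (fun y => w y 1) x) ^ 2 +
         (pd 1 (fun y => w y 0) x) ^ 2 + (pd 1 (fun y => w y 1) x) ^ 2 +
         (pd 2 (fun y => w y 2) x) ^ 2) := by
  have hwj : ∀ j, ContDiffOn ℝ 1 (fun y => w y j) U := contDiffOn_pi.1 hw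
  have hcont : ∀ j, ContinuousOn (fun y => w y j) (closedCyl a b) :=
    fun j => (hwj j).continuousOn.mono hsub
  have hcont_pd : ∀ i j, ContinuousOn (pd i fun y => w y j) (closedCyl a b) :=
    fun i j => ((hwj j).continuousOn_pd hU i).mono hsub
  have hcont_flux : ∀ i j, ContinuousOn (pd i (radialFlux w j)) (closedCyl a b) :=
    fun i j => ((hw.radialFlux j).continuousOn_pd hU i).mono hsub
  refine setIntegral_le_two_mul_of_sub_le (measurableSet_solidCyl a b)
    (ContinuousOn.integrableOn_solidCyl (by fun_prop))
    (ContinuousOn.integrableOn_solidCyl (by fun_prop))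
    (ContinuousOn.integrableOn_solidCyl (by fun_prop))
    (integral_pd_radialFlux_add_eq_zero hU hsub hw hbc) fun x hx => ?_
  have hwx : ∀ j, DifferentiableAt ℝ (fun y => w y j) x := fun j =>
    ((hwj j).differentiableOn one_ne_zero).differentiableAt
      (hU.mem_nhds (hsub (solidCyl_subset_closedCyl a b hx)))
  have hdivx := hdiv x (solidCyl_subset_closedCyl a b hx)
  rw [Fin.sum_univ_three, ← eq_neg_iff_add_eq_zero] at hdivx
  rw [pd_radialFlux_add hwx, hdivx, radialPart]
  linarith [neg_cross_terms_le (w₀ := w x 0) (w₁ := w x 1) (A := pd 0 (fun y => w y 0) x)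
    (B := pd 0 (fun y => w y 1) x) (C := pd 1 (fun y => w y 0) x)
    (D := pd 1 (fun y => w y 1) x) (E := pd 2 (fun y => w y 2) x) hx.1.le]

/-- Poincaré-type inequality for the horizontal components:
if `w` is `C¹` on a neighborhood of the closed cylinder `D̄ × [a,b]`, divergence free
there, and its horizontal part is tangent to the lateral boundary, then
`∫ (w₁² + w₂²) ≤ 2 ∫ ( Σ_{i,j=1}^{2} (∂_i w_j)² + (∂₃ w₃)² )` over `D × [a,b]`. -/
theorem stmt12 (a b : ℝ) (hab : a < b) (w : (Fin 3 → ℝ) → (Fin 3 → ℝ))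
    (U : Set (Fin 3 → ℝ)) (hU : IsOpen U) (hsub : closedCyl a b ⊆ U)
    (hw : ContDiffOn ℝ 1 w U)
    (hdiv : ∀ x ∈ closedCyl a b, ∑ j : Fin 3, pd j (fun y => w y j) x = 0)
    (hbc : ∀ x : Fin 3 → ℝ, x 0 ^ 2 + x 1 ^ 2 = 1 → x 2 ∈ Set.Icc a b →
      w x 0 * x 0 + w x 1 * x 1 = 0) :
    (∫ x in solidCyl a b, (w x 0 ^ 2 + w x 1 ^ 2)) ≤
      2 * ∫ x in solidCyl a b,
        ((pd 0 (fun y => w y 0) x) ^ 2 + (pd 0 (fun y => w y 1) x) ^ 2 +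
         (pd 1 (fun y => w y 0) x) ^ 2 + (pd 1 (fun y => w y 1) x) ^ 2 +
         (pd 2 (fun y => w y 2) x) ^ 2) :=
  stmt12_general a b w U hU hsub hw hdiv hbc
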